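/- Let β > 2, N ≥ 1 and z ≥ 0. Then R_N^β(z) ≥ z² − 1. In particular, for z ≥ 1 one has R_N^β(z) ≥ z². -/

import Mathlib

/-!
On `[0, N]` the truncation is invisible, so `S_N^γ(s) = s^γ` there; in particular `S_N^γ(1) = 1`
when `N ≥ 1`, and integrating once more gives `∫_0^1 S_N^{β-1} = 1/β`. Beyond `1` the integrand
`max(0, min(N, t))^{γ-1}` is at least `1`, so `S_N^γ(s) ≥ 1 + γ (s - 1)`, and integrating this
linear bound over `[1, z]` yields `R_N^β(z) ≥ 1 + β (z - 1) + β (β - 1) (z - 1)² / 2 ≥ z²`, the last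
step because `β (β - 1) / 2 ≥ 1` for `β ≥ 2`. For `z ∈ [0, 1]` the bound `z² - 1 ≤ 0 ≤ R_N^β(z)`
is trivial.
-/

open intervalIntegral Set

/-- The truncated power `S_N^γ(z) := γ · ∫_0^z max(0, min(N, s))^{γ−1} ds`. -/
noncomputable def truncPow (N γ : ℝ) (z : ℝ) : ℝ :=
  γ * ∫ s in (0 : ℝ)..z, max 0 (min N s) ^ (γ - 1)

/-- The doubly integrated truncation `R_N^β(z) := β · ∫_0^z S_N^{β−1}(s) ds`. -/
noncomputable def truncPow2 (N β : ℝ) (z : ℝ) : ℝ :=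
  β * ∫ s in (0 : ℝ)..z, truncPow N (β - 1) s

theorem add_integral_le_integral_of_le_on {f g : ℝ → ℝ} {a b c : ℝ} (hbc : b ≤ c)
    (hf : ∀ x y, IntervalIntegrable f MeasureTheory.volume x y)
    (hg : IntervalIntegrable g MeasureTheory.volume b c) (hgf : ∀ t ∈ Icc b c, g t ≤ f t) :
    (∫ t in a..b, f t) + ∫ t in b..c, g t ≤ ∫ t in a..c, f t := by
  rw [← integral_add_adjacent_intervals (hf a b) (hf b c)]
  gcongr
  exact integral_mono_on hbc hg (hf b c) hgf

theorem integral_one_add_mul_sub_one (γ z : ℝ) :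
    ∫ s in (1 : ℝ)..z, (1 + γ * (s - 1)) = (z - 1) + γ * ((z - 1) ^ 2 / 2) := by
  rw [integral_comp_sub_right (fun u => 1 + γ * u),
    integral_add intervalIntegrable_const (intervalIntegrable_id.const_mul γ),
    integral_const_mul, integral_id]
  simp

section truncPow

variable {N γ s : ℝ}

theorem continuous_truncPow_integrand (hγ : 1 ≤ γ) :
    Continuous fun t : ℝ => max 0 (min N t) ^ (γ - 1) :=
  (continuous_const.max (continuous_const.min continuous_id)).rpow_const
    fun _ => Or.inr (by linarith)

theorem truncPow_eq_rpow (hγ : 0 < γ) (hs : 0 ≤ s) (hsN : s ≤ N) : truncPow N γ s = s ^ γ := by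
  have htrunc : EqOn (fun t : ℝ => max 0 (min N t) ^ (γ - 1)) (· ^ (γ - 1)) (uIcc 0 s) := by
    intro t ht
    rw [uIcc_of_le hs] at ht
    simp only [min_eq_right (ht.2.trans hsN), max_eq_right ht.1]
  rw [truncPow, integral_congr htrunc, integral_rpow (Or.inl (by linarith)), sub_add_cancel,
    Real.zero_rpow hγ.ne', sub_zero, mul_div_cancel₀ _ hγ.ne']

theorem truncPow_nonneg (hγ : 0 ≤ γ) (hs : 0 ≤ s) : 0 ≤ truncPow N γ s :=
  mul_nonneg hγ (integral_nonneg hs fun _ _ => Real.rpow_nonneg (le_max_left _ _) _)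

theorem continuous_truncPow (hγ : 1 ≤ γ) : Continuous (truncPow N γ) :=
  continuous_const.mul <|
    continuous_primitive (fun _ _ => (continuous_truncPow_integrand hγ).intervalIntegrable _ _) 0

theorem one_add_mul_sub_one_le_truncPow (hγ : 1 ≤ γ) (hN : 1 ≤ N) (hs : 1 ≤ s) :
    1 + γ * (s - 1) ≤ truncPow N γ s := by
  have hone : γ * ∫ t in (0 : ℝ)..1, max 0 (min N t) ^ (γ - 1) = 1 := by
    rw [← truncPow, truncPow_eq_rpow (by linarith) zero_le_one hN, Real.one_rpow]
  have hsplit := add_integral_le_integral_of_le_on (a := 0) hs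
    (fun _ _ => (continuous_truncPow_integrand hγ).intervalIntegrable _ _)
    (intervalIntegrable_const (c := 1))
    fun t ht => Real.one_le_rpow (le_max_of_le_right (le_min hN ht.1)) (by linarith)
  rw [integral_const, smul_eq_mul, mul_one] at hsplit
  calc 1 + γ * (s - 1)
      = γ * ((∫ t in (0 : ℝ)..1, max 0 (min N t) ^ (γ - 1)) + (s - 1)) := by rw [mul_add, hone]
    _ ≤ truncPow N γ s := mul_le_mul_of_nonneg_left hsplit (by linarith)

end truncPow

theorem truncPow2_nonneg {N β z : ℝ} (hβ : 1 ≤ β) (hz : 0 ≤ z) : 0 ≤ truncPow2 N β z :=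
  mul_nonneg (by linarith) (integral_nonneg hz fun _ ht => truncPow_nonneg (by linarith) ht.1)

theorem sq_le_truncPow2 {N β z : ℝ} (hβ : 2 ≤ β) (hN : 1 ≤ N) (hz : 1 ≤ z) :
    z ^ 2 ≤ truncPow2 N β z := by
  have hγ : 1 ≤ β - 1 := by linarith
  have hβ0 : β ≠ 0 := by positivity
  have hhead : ∫ s in (0 : ℝ)..1, truncPow N (β - 1) s = 1 / β := by
    have hpow : EqOn (truncPow N (β - 1)) (· ^ (β - 1)) (uIcc 0 1) := fun s hs => by
      rw [uIcc_of_le zero_le_one] at hs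
      exact truncPow_eq_rpow (by linarith) hs.1 (hs.2.trans hN)
    rw [integral_congr hpow, integral_rpow (Or.inl (by linarith)), sub_add_cancel,
      Real.one_rpow, Real.zero_rpow hβ0, sub_zero]
  have hsplit := add_integral_le_integral_of_le_on (a := 0) hz
    (fun _ _ => (continuous_truncPow hγ).intervalIntegrable _ _)
    ((by fun_prop : Continuous fun s : ℝ => 1 + (β - 1) * (s - 1)).intervalIntegrable _ _)
    fun s hs => one_add_mul_sub_one_le_truncPow hγ hN hs.1
  rw [hhead, integral_one_add_mul_sub_one] at hsplit
  calc z ^ 2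
      ≤ 1 + β * (z - 1) + β * (β - 1) * ((z - 1) ^ 2 / 2) := by
        nlinarith [mul_nonneg (sq_nonneg (z - 1)) (by nlinarith : 0 ≤ β * (β - 1) - 2)]
    _ = β * (1 / β + ((z - 1) + (β - 1) * ((z - 1) ^ 2 / 2))) := by
        field_simp
        ring
    _ ≤ truncPow2 N β z := mul_le_mul_of_nonneg_left hsplit (by linarith)

/-- For `β > 2`, `N ≥ 1` and `z ≥ 0`: `R_N^β(z) ≥ z² − 1`; in particular
`R_N^β(z) ≥ z²` for `z ≥ 1`. -/
theorem truncPow2_lower_bound (β N z : ℝ) (hβ : 2 < β) (hN : 1 ≤ N) (hz : 0 ≤ z) :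
    z ^ 2 - 1 ≤ truncPow2 N β z ∧ (1 ≤ z → z ^ 2 ≤ truncPow2 N β z) := by
  have hlarge : 1 ≤ z → z ^ 2 ≤ truncPow2 N β z := sq_le_truncPow2 hβ.le hN
  refine ⟨?_, hlarge⟩
  rcases le_or_gt 1 z with hz1 | hz1
  · linarith [hlarge hz1]
  · nlinarith [truncPow2_nonneg (N := N) (by linarith : 1 ≤ β) hz]
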